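/- arXiv:2411.00558 — 2 statements merged into one kernel-verified Lean document; each statement's English description precedes it below -/
import Mathlib

section
/- (Theorem 'Accountable Safety': the finalized chain is n/3-accountable.) Call a validator v FFG-compliant w.r.t. a set V of FFG-votes if there exists a partial function on ℕ assigning to each slot t at most one pair of checkpoints (S_t, T_t), such that the votes from v in V are exactly the votes (S_t, T_t, v) over the slots t in its domain, T_t.c = t for each such slot, and S_t ≤ S_{t′} (checkpoint order) whenever t ≤ t′ are both in its domain. Let V be a set of FFG-votes among n validators and V₁, V₂ ⊆ V. If checkpoints 𝒞₁ finalized w.r.t. V₁ and 𝒞₂ finalized w.r.t. V₂ have conflicting chains, then there exists a set W of validators with 3·|W| ≥ n such that every v ∈ W violates E1 or E2 w.r.t. V₁ ∪ V₂; moreover, no validator that is FFG-compliant w.r.t. V violates E1 or E2 w.r.t. V, so in particular W contains no FFG-compliant validator. -/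
structure Block (β : Type) where
  body : β
  p : ℤ

def genesisBlock {β : Type} (g : β) : Block β := ⟨g, -1⟩

structure Chain (β : Type) (g : β) where
  blocks : List (Block β)
  ne : blocks ≠ []
  head_genesis : blocks.head? = some (genesisBlock g)
  strict : List.Chain' (fun a b => a.p < b.p) blocks

namespace Chain

variable {β : Type} {g : β}

/-- The height of a chain: the slot of its last block. -/
def height (χ : Chain β g) : ℤ := (χ.blocks.getLast χ.ne).p

/-- `χ₁ ⪯ χ₂`: `χ₁` is a prefix of `χ₂`. -/
def IsPrefix (χ₁ χ₂ : Chain β g) : Prop := χ₁.blocks <+: χ₂.blocks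

/-- Two chains conflict if neither is a prefix of the other. -/
def Conflicts (χ₁ χ₂ : Chain β g) : Prop := ¬ χ₁.IsPrefix χ₂ ∧ ¬ χ₂.IsPrefix χ₁

end Chain

def genesisChain {β : Type} (g : β) : Chain β g where
  blocks := [genesisBlock g]
  ne := by simp
  head_genesis := rfl
  strict := List.isChain_singleton _

structure Checkpoint (β : Type) (g : β) where
  chain : Chain β g
  c : ℕ
  height_le : chain.height ≤ (c : ℤ)

def genesisCheckpoint {β : Type} (g : β) : Checkpoint β g where
  chain := genesisChain g
  c := 0
  height_le := by simp [Chain.height, genesisChain, genesisBlock]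

namespace Checkpoint

variable {β : Type} {g : β}

/-- Lexicographic order on checkpoints: `𝒞 ≤ 𝒞′`. -/
def le (C C' : Checkpoint β g) : Prop :=
  C.c < C'.c ∨ (C.c = C'.c ∧ C.chain.height ≤ C'.chain.height)

/-- Strict lexicographic order on checkpoints: `𝒞 < 𝒞′`. -/
def lt (C C' : Checkpoint β g) : Prop :=
  C.c < C'.c ∨ (C.c = C'.c ∧ C.chain.height < C'.chain.height)

end Checkpoint

structure FFGVote (n : ℕ) (β : Type) (g : β) where
  source : Checkpoint β g
  target : Checkpoint β g
  sender : Fin n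

def FFGVote.Valid {n : ℕ} {β : Type} {g : β} (m : FFGVote n β g) : Prop :=
  m.source.chain.IsPrefix m.target.chain ∧ m.source.c < m.target.c

/-- The set of senders of a set of votes. -/
def senders {n : ℕ} {β : Type} {g : β} (M : Set (FFGVote n β g)) : Set (Fin n) :=
  {v | ∃ m ∈ M, m.sender = v}

/-- A checkpoint is justified w.r.t. a set of votes `V`. -/
inductive Justified {n : ℕ} {β : Type} {g : β} (V : Set (FFGVote n β g)) :
    Checkpoint β g → Prop
  | genesis : Justified V (genesisCheckpoint g)
  | step (C : Checkpoint β g) (M : Set (FFGVote n β g))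
      (hMV : M ⊆ V)
      (hcard : 2 * n ≤ 3 * (senders M).ncard)
      (hjust : ∀ m ∈ M, Justified V m.source)
      (hvotes : ∀ m ∈ M, m.Valid ∧
        m.source.chain.IsPrefix C.chain ∧ C.chain.IsPrefix m.target.chain ∧
        m.target.c = C.c) :
      Justified V C

/-- A checkpoint is finalized w.r.t. a set of votes `V`. -/
def Finalized {n : ℕ} {β : Type} {g : β} (V : Set (FFGVote n β g))
    (C : Checkpoint β g) : Prop :=
  C = genesisCheckpoint g ∨
    (Justified V C ∧ ∃ M ⊆ V, 2 * n ≤ 3 * (senders M).ncard ∧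
      ∀ m ∈ M, m.Valid ∧ m.source = C ∧ m.target.c = C.c + 1)

/-- E1 (double voting). -/
def ViolatesE1 {n : ℕ} {β : Type} {g : β} (V : Set (FFGVote n β g)) (v : Fin n) : Prop :=
  ∃ m₁ ∈ V, ∃ m₂ ∈ V, m₁.sender = v ∧ m₂.sender = v ∧ m₁ ≠ m₂ ∧
    m₁.target.c = m₂.target.c

/-- E2 (surround voting). -/
def ViolatesE2 {n : ℕ} {β : Type} {g : β} (V : Set (FFGVote n β g)) (v : Fin n) : Prop :=
  ∃ m₁ ∈ V, ∃ m₂ ∈ V, m₁.sender = v ∧ m₂.sender = v ∧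
    m₂.source.lt m₁.source ∧ m₁.target.c < m₂.target.c

structure Ack (n : ℕ) (β : Type) (g : β) where
  cp : Checkpoint β g
  sender : Fin n

/-- E3 (ack surround). -/
def ViolatesE3 {n : ℕ} {β : Type} {g : β} (V : Set (FFGVote n β g))
    (A : Set (Ack n β g)) (v : Fin n) : Prop :=
  ∃ m ∈ V, ∃ a ∈ A, m.sender = v ∧ a.sender = v ∧
    m.source.lt a.cp ∧ a.cp.c < m.target.c

/-- Finalized with acknowledgments. -/
def FinalizedWithAcks {n : ℕ} {β : Type} {g : β} (V : Set (FFGVote n β g))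
    (A : Set (Ack n β g)) (C : Checkpoint β g) : Prop :=
  Finalized V C ∨
    (Justified V C ∧ 2 * n ≤ 3 * (Set.ncard {v : Fin n | (⟨C, v⟩ : Ack n β g) ∈ A}))

/-- A validator whose votes in `V` come from a slot-indexed family satisfying
Constraint 1 (at most one vote per slot, target slot equal to the voting slot,
monotone sources). -/
def FFGCompliant {n : ℕ} {β : Type} {g : β} (V : Set (FFGVote n β g)) (v : Fin n) : Prop :=
  ∃ f : ℕ → Option (Checkpoint β g × Checkpoint β g),
    ({m ∈ V | m.sender = v} =
      {m : FFGVote n β g | ∃ t S T, f t = some (S, T) ∧ m = ⟨S, T, v⟩}) ∧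
    (∀ t S T, f t = some (S, T) → T.c = t) ∧
    (∀ t t' S T S' T', t ≤ t' → f t = some (S, T) → f t' = some (S', T') → S.le S')

/-!
Assume `C₁ ≤ C₂`. Follow the justification of `C₂` backwards, from each target to a link
source that is still `≥ C₁`, as long as the current checkpoint does not extend `C₁`. This
ends at a checkpoint `D ≥ C₁` whose chain does not extend `C₁.chain` and that is justified
by a supermajority link all of whose sources are `< C₁`. If `D.c > C₁.c`, each of these
votes together with a vote finalizing `C₁` (source `C₁`, target slot `C₁.c + 1`) from the
same validator is a double vote or a surround vote; if `D.c = C₁.c`, the votes justifying `D`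
and `C₁` are distinct votes for the same target slot. Two supermajorities of `n` validators
share at least `n / 3` of them.
-/

namespace Chain

variable {β : Type} {g : β}

lemma genesisChain_isPrefix (χ : Chain β g) : (genesisChain g).IsPrefix χ :=
  List.singleton_prefix_iff_head?_eq_some.mpr χ.head_genesis

lemma height_lt_of_isPrefix_of_ne {χ₁ χ₂ : Chain β g} (h : χ₁.IsPrefix χ₂)
    (hne : χ₁.blocks ≠ χ₂.blocks) : χ₁.height < χ₂.height := by
  obtain ⟨t, ht⟩ := h
  have ht_ne : t ≠ [] := by rintro rfl; exact hne (by simpa using ht)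
  have hlast : χ₂.blocks.getLast χ₂.ne = t.getLast ht_ne := by
    simp_rw [← ht]; exact List.getLast_append_of_ne_nil _ ht_ne
  have hsorted : (χ₁.blocks ++ t).Pairwise (fun a b : Block β => a.p < b.p) := by
    have : IsTrans (Block β) (fun a b => a.p < b.p) := ⟨fun _ _ _ => lt_trans⟩
    rw [ht]; exact List.isChain_iff_pairwise.mp χ₂.strict
  rw [height, height, hlast]
  exact (List.pairwise_append.mp hsorted).2.2 _ (List.getLast_mem _) _ (List.getLast_mem _)

lemma blocks_eq_of_isPrefix_of_height_le {χ₁ χ₂ : Chain β g} (h : χ₁.IsPrefix χ₂)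
    (hh : χ₂.height ≤ χ₁.height) : χ₁.blocks = χ₂.blocks := by
  by_contra hne
  exact (height_lt_of_isPrefix_of_ne h hne).not_ge hh

lemma isPrefix_of_isPrefix_of_height_le {χ₁ χ₂ χ : Chain β g} (h₁ : χ₁.IsPrefix χ)
    (h₂ : χ₂.IsPrefix χ) (hh : χ₁.height ≤ χ₂.height) : χ₁.IsPrefix χ₂ := by
  rcases List.prefix_or_prefix_of_prefix h₁ h₂ with h | h
  · exact h
  · rw [IsPrefix, blocks_eq_of_isPrefix_of_height_le h hh]

end Chain

namespace Checkpoint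

variable {β : Type} {g : β}

lemma le_total (C C' : Checkpoint β g) : C.le C' ∨ C'.le C := by
  unfold le; omega

lemma lt_of_not_le {C C' : Checkpoint β g} (h : ¬ C.le C') : C'.lt C := by
  unfold le lt at *; omega

lemma lt_irrefl (C : Checkpoint β g) : ¬ C.lt C := by
  unfold lt; omega

lemma not_le_of_lt {C C' : Checkpoint β g} (h : C.lt C') : ¬ C'.le C := by
  unfold le lt at *; omega

lemma chain_isPrefix_of_le_genesis {C : Checkpoint β g} (h : C.le (genesisCheckpoint g)) :
    C.chain.IsPrefix (genesisChain g) := by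
  have hh : C.chain.height ≤ (genesisChain g).height := by
    unfold le at h; simp only [genesisCheckpoint] at h; omega
  rw [Chain.IsPrefix,
    ← Chain.blocks_eq_of_isPrefix_of_height_le C.chain.genesisChain_isPrefix hh]

end Checkpoint

lemma le_three_mul_ncard_inter {α : Type*} [Finite α] {A B : Set α}
    (hA : 2 * Nat.card α ≤ 3 * A.ncard) (hB : 2 * Nat.card α ≤ 3 * B.ncard) :
    Nat.card α ≤ 3 * (A ∩ B).ncard := by
  have hunion : (A ∪ B).ncard ≤ Nat.card α := by
    simpa using Set.ncard_le_ncard (Set.subset_univ (A ∪ B))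
  have := Set.ncard_union_add_ncard_inter A B
  omega

variable {n : ℕ} {β : Type} {g : β}

def Slashable (V : Set (FFGVote n β g)) (v : Fin n) : Prop :=
  ViolatesE1 V v ∨ ViolatesE2 V v

lemma Slashable.mono {V V' : Set (FFGVote n β g)} (h : V ⊆ V') {v : Fin n}
    (hv : Slashable V v) : Slashable V' v := by
  rcases hv with ⟨m₁, h₁, m₂, h₂, hv⟩ | ⟨m₁, h₁, m₂, h₂, hv⟩
  · exact Or.inl ⟨m₁, h h₁, m₂, h h₂, hv⟩
  · exact Or.inr ⟨m₁, h h₁, m₂, h h₂, hv⟩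

lemma FFGCompliant.not_slashable {V : Set (FFGVote n β g)} {v : Fin n}
    (h : FFGCompliant V v) : ¬ Slashable V v := by
  obtain ⟨f, hvotes, hslot, hmono⟩ := h
  have hf : ∀ m ∈ V, m.sender = v →
      f m.target.c = some (m.source, m.target) ∧ m = ⟨m.source, m.target, v⟩ := by
    intro m hm hmv
    obtain ⟨t, S, T, hft, rfl⟩ := (Set.ext_iff.mp hvotes m).mp ⟨hm, hmv⟩
    exact ⟨hslot t S T hft ▸ hft, rfl⟩
  rintro (⟨m₁, h₁, m₂, h₂, hv₁, hv₂, hne, hc⟩ | ⟨m₁, h₁, m₂, h₂, hv₁, hv₂, hlt, hc⟩)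
  · obtain ⟨hf₁, he₁⟩ := hf m₁ h₁ hv₁
    obtain ⟨hf₂, he₂⟩ := hf m₂ h₂ hv₂
    rw [hc, hf₂, Option.some.injEq, Prod.mk.injEq] at hf₁
    exact hne (by rw [he₁, he₂, hf₁.1, hf₁.2])
  · exact Checkpoint.not_le_of_lt hlt <|
      hmono _ _ _ _ _ _ hc.le (hf m₁ h₁ hv₁).1 (hf m₂ h₂ hv₂).1

def FFGVote.SlashablePair (m₁ m₂ : FFGVote n β g) : Prop :=
  (m₁ ≠ m₂ ∧ m₁.target.c = m₂.target.c) ∨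
    (m₂.source.lt m₁.source ∧ m₁.target.c < m₂.target.c)

lemma FFGVote.slashablePair_of_source_lt {m₁ m₂ : FFGVote n β g}
    (h₁ : m₁.target.c = m₁.source.c + 1) (hsrc : m₂.source.lt m₁.source)
    (hc : m₁.source.c < m₂.target.c) : m₁.SlashablePair m₂ := by
  have hne : m₁ ≠ m₂ := fun he => Checkpoint.lt_irrefl _ (he ▸ hsrc)
  by_cases hc₂ : m₂.target.c = m₁.source.c + 1
  · exact Or.inl ⟨hne, by rw [h₁, hc₂]⟩
  · exact Or.inr ⟨hsrc, by omega⟩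

lemma Finalized.justified {V : Set (FFGVote n β g)} {C : Checkpoint β g}
    (h : Finalized V C) : Justified V C := by
  rcases h with rfl | ⟨h, -⟩
  · exact .genesis
  · exact h

def OneThirdSlashable (V : Set (FFGVote n β g)) : Prop :=
  ∃ W : Set (Fin n), n ≤ 3 * W.ncard ∧ ∀ v ∈ W, Slashable V v

lemma oneThirdSlashable_of_supermajorities {V M₁ M₂ : Set (FFGVote n β g)}
    (hM₁V : M₁ ⊆ V) (hM₂V : M₂ ⊆ V)
    (hM₁ : 2 * n ≤ 3 * (senders M₁).ncard) (hM₂ : 2 * n ≤ 3 * (senders M₂).ncard)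
    (hpair : ∀ m₁ ∈ M₁, ∀ m₂ ∈ M₂, m₁.SlashablePair m₂) : OneThirdSlashable V := by
  refine ⟨senders M₁ ∩ senders M₂, ?_, ?_⟩
  · have := le_three_mul_ncard_inter (A := senders M₁) (B := senders M₂)
    simp only [Nat.card_fin] at this
    exact this hM₁ hM₂
  rintro v ⟨⟨m₁, hm₁, rfl⟩, ⟨m₂, hm₂, hv⟩⟩
  rcases hpair m₁ hm₁ m₂ hm₂ with h | h
  · exact Or.inl ⟨m₁, hM₁V hm₁, m₂, hM₂V hm₂, rfl, hv, h⟩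
  · exact Or.inr ⟨m₁, hM₁V hm₁, m₂, hM₂V hm₂, rfl, hv, h⟩

lemma oneThirdSlashable_of_finalized_of_justified {V₁ V₂ : Set (FFGVote n β g)}
    {C D : Checkpoint β g} (hC : Finalized V₁ C) (hD : Justified V₂ D) (hle : C.le D)
    (hnp : ¬ C.chain.IsPrefix D.chain) : OneThirdSlashable (V₁ ∪ V₂) := by
  rcases hC with rfl | ⟨hCj, M₁, hM₁V, hM₁, hfin⟩
  · exact absurd D.chain.genesisChain_isPrefix hnp
  induction hD with
  | genesis => exact absurd (Checkpoint.chain_isPrefix_of_le_genesis hle) hnp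
  | step D M hMV hM _ hlink ih =>
    by_cases hex : ∃ m ∈ M, C.le m.source
    · obtain ⟨m, hm, hCm⟩ := hex
      exact ih m hm hCm fun h => hnp (h.trans (hlink m hm).2.1)
    have hsrc : ∀ m ∈ M, m.source.lt C := fun m hm =>
      Checkpoint.lt_of_not_le fun h => hex ⟨m, hm, h⟩
    rcases hle with hlt | ⟨hc, hh⟩
    · refine oneThirdSlashable_of_supermajorities (hM₁V.trans Set.subset_union_left)
        (hMV.trans Set.subset_union_right) hM₁ hM fun m₁ hm₁ m₂ hm₂ => ?_
      obtain ⟨-, hsrc₁, hc₁⟩ := hfin m₁ hm₁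
      subst hsrc₁
      exact FFGVote.slashablePair_of_source_lt hc₁ (hsrc m₂ hm₂) ((hlink m₂ hm₂).2.2.2 ▸ hlt)
    · rcases hCj with _ | ⟨_, M₀, hM₀V, hM₀, -, hjust⟩
      · exact absurd D.chain.genesisChain_isPrefix hnp
      refine oneThirdSlashable_of_supermajorities (hM₀V.trans Set.subset_union_left)
        (hMV.trans Set.subset_union_right) hM₀ hM fun m₁ hm₁ m₂ hm₂ => Or.inl ⟨?_, ?_⟩
      -- a common target would extend both chains, making them nested
      · rintro rfl
        exact hnp (Chain.isPrefix_of_isPrefix_of_height_le (hjust m₁ hm₁).2.2.1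
          (hlink m₁ hm₂).2.2.1 hh)
      · rw [(hjust m₁ hm₁).2.2.2, (hlink m₂ hm₂).2.2.2, hc]

lemma oneThirdSlashable_of_finalized_of_conflicts {V₁ V₂ : Set (FFGVote n β g)}
    {C₁ C₂ : Checkpoint β g} (hC₁ : Finalized V₁ C₁) (hC₂ : Finalized V₂ C₂)
    (hconf : C₁.chain.Conflicts C₂.chain) : OneThirdSlashable (V₁ ∪ V₂) := by
  rcases C₁.le_total C₂ with h | h
  · exact oneThirdSlashable_of_finalized_of_justified hC₁ hC₂.justified h hconf.1
  · exact Set.union_comm V₂ V₁ ▸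
      oneThirdSlashable_of_finalized_of_justified hC₂ hC₁.justified h hconf.2

/-- Accountable Safety: the finalized chain is n/3-accountable. -/
theorem accountable_safety_n_over_three
    {n : ℕ} {β : Type} {g : β} (V V₁ V₂ : Set (FFGVote n β g))
    (hV₁ : V₁ ⊆ V) (hV₂ : V₂ ⊆ V)
    (C₁ C₂ : Checkpoint β g)
    (hC₁ : Finalized V₁ C₁) (hC₂ : Finalized V₂ C₂)
    (hconf : C₁.chain.Conflicts C₂.chain) :
    (∃ W : Set (Fin n), n ≤ 3 * W.ncard ∧
      (∀ v ∈ W, ViolatesE1 (V₁ ∪ V₂) v ∨ ViolatesE2 (V₁ ∪ V₂) v) ∧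
      (∀ v ∈ W, ¬ FFGCompliant V v)) ∧
    (∀ v : Fin n, FFGCompliant V v → ¬ (ViolatesE1 V v ∨ ViolatesE2 V v)) := by
  obtain ⟨W, hW, hslash⟩ := oneThirdSlashable_of_finalized_of_conflicts hC₁ hC₂ hconf
  refine ⟨⟨W, hW, hslash, fun v hv hcomp => hcomp.not_slashable ?_⟩,
    fun v hcomp => hcomp.not_slashable⟩
  exact (hslash v hv).mono (Set.union_subset hV₁ hV₂)
end

section
/- (Appendix lemma: honest validators are never slashed in the protocol with acknowledgments.) Let v be a validator whose sent FFG-votes are given by a slot-indexed family: a partial function on ℕ assigning to each slot t at most one pair of checkpoints (S_t, T_t), such that T_t.c = t whenever defined and S_t ≤ S_{t′} (checkpoint order) whenever t ≤ t′ are both in the domain; and whose sent acks are given by a partial function on ℕ assigning to each slot t at most one checkpoint C_t with C_t.c = t, such that for every slot t where an ack C_t is defined and every slot t′ > t where a vote (S_{t′}, T_{t′}) is defined, C_t ≤ S_{t′}. Then v violates neither E1 nor E2 w.r.t. the set of its votes {(S_t, T_t, v)}, nor E3 w.r.t. this vote set together with the ack set {(C_t, v)}. -/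
/-!
Each vote of `v` is indexed by the slot of its target, so two votes with the same target slot
coincide (E1). A surround vote (E2) or an ack surrounded by a vote (E3) would need a source
checkpoint strictly below, in the lexicographic order, a checkpoint of an earlier slot; but the
sources are monotone in the slot and dominate every earlier ack, and `X ≤ Y` excludes `Y < X`.
-/

namespace Checkpoint

variable {β : Type} {g : β}

theorem not_lt_of_le {X Y : Checkpoint β g} (h : X.le Y) : ¬ Y.lt X := by
  rcases h with h | ⟨h₁, h₂⟩ <;> rintro (h' | ⟨h₁', h₂'⟩) <;> omega

end Checkpoint

section SlotIndexed

variable {n : ℕ} {β : Type} {g : β}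

def slotVotes (f : ℕ → Option (Checkpoint β g × Checkpoint β g)) (v : Fin n) :
    Set (FFGVote n β g) :=
  {m | ∃ t S T, f t = some (S, T) ∧ m = ⟨S, T, v⟩}

def slotAcks (a : ℕ → Option (Checkpoint β g)) (v : Fin n) : Set (Ack n β g) :=
  {ack | ∃ t C, a t = some C ∧ ack = ⟨C, v⟩}

variable (v : Fin n) {f : ℕ → Option (Checkpoint β g × Checkpoint β g)}

theorem not_violatesE1_slotVotes (htarget : ∀ t S T, f t = some (S, T) → T.c = t) :
    ¬ ViolatesE1 (slotVotes f v) v := by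
  rintro ⟨_, ⟨t₁, S₁, T₁, hf₁, rfl⟩, _, ⟨t₂, S₂, T₂, hf₂, rfl⟩, -, -, hne, hc⟩
  have hslot : t₁ = t₂ := (htarget _ _ _ hf₁).symm.trans (hc.trans (htarget _ _ _ hf₂))
  subst hslot
  obtain ⟨rfl, rfl⟩ := Prod.mk.inj (Option.some.inj (hf₁.symm.trans hf₂))
  exact hne rfl

theorem not_violatesE2_slotVotes (htarget : ∀ t S T, f t = some (S, T) → T.c = t)
    (hmono : ∀ t t' S T S' T', t ≤ t' → f t = some (S, T) → f t' = some (S', T') → S.le S') :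
    ¬ ViolatesE2 (slotVotes f v) v := by
  rintro ⟨_, ⟨t₁, S₁, T₁, hf₁, rfl⟩, _, ⟨t₂, S₂, T₂, hf₂, rfl⟩, -, -, hlt, hc⟩
  have hslot : t₁ ≤ t₂ := by
    have h₁ := htarget _ _ _ hf₁
    have h₂ := htarget _ _ _ hf₂
    dsimp only at hc
    omega
  exact Checkpoint.not_lt_of_le (hmono _ _ _ _ _ _ hslot hf₁ hf₂) hlt

theorem not_violatesE3_slotVotes_slotAcks {a : ℕ → Option (Checkpoint β g)}
    (htarget : ∀ t S T, f t = some (S, T) → T.c = t)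
    (hackslot : ∀ t C, a t = some C → C.c = t)
    (hacksrc : ∀ t t' C S T, a t = some C → t < t' → f t' = some (S, T) → C.le S) :
    ¬ ViolatesE3 (slotVotes f v) (slotAcks a v) v := by
  rintro ⟨_, ⟨t', S, T, hf, rfl⟩, _, ⟨t, C, ha, rfl⟩, -, -, hlt, hc⟩
  have hslot : t < t' := by
    have hT := htarget _ _ _ hf
    have hC := hackslot _ _ ha
    dsimp only at hc
    omega
  exact Checkpoint.not_lt_of_le (hacksrc _ _ _ _ _ ha hslot hf) hlt

end SlotIndexed

/-- honest validators are never slashed in the protocol with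
acknowledgments. -/
theorem honest_never_slashed_with_acks
    {n : ℕ} {β : Type} {g : β} (v : Fin n)
    (f : ℕ → Option (Checkpoint β g × Checkpoint β g))
    (a : ℕ → Option (Checkpoint β g))
    (htarget : ∀ t S T, f t = some (S, T) → T.c = t)
    (hmono : ∀ t t' S T S' T', t ≤ t' → f t = some (S, T) → f t' = some (S', T') →
      S.le S')
    (hackslot : ∀ t C, a t = some C → C.c = t)
    (hacksrc : ∀ t t' C S T, a t = some C → t < t' → f t' = some (S, T) → C.le S) :
    ¬ ViolatesE1 {m : FFGVote n β g | ∃ t S T, f t = some (S, T) ∧ m = ⟨S, T, v⟩} v ∧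
    ¬ ViolatesE2 {m : FFGVote n β g | ∃ t S T, f t = some (S, T) ∧ m = ⟨S, T, v⟩} v ∧
    ¬ ViolatesE3 {m : FFGVote n β g | ∃ t S T, f t = some (S, T) ∧ m = ⟨S, T, v⟩}
        {ack : Ack n β g | ∃ t C, a t = some C ∧ ack = ⟨C, v⟩} v := by
  exact ⟨not_violatesE1_slotVotes v htarget, not_violatesE2_slotVotes v htarget hmono,
    not_violatesE3_slotVotes_slotAcks v htarget hackslot hacksrc⟩
end
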